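/- Let G be a simple graph on n vertices and suppose S ⊆ V achieves the maximum cut. If G is L-exact (i.e., μ_1(G) = (4/n)·mcut(G)), then every vertex of G has exactly μ_1/2 neighbors on the opposite side of the partition {S, V\S}. -/

import Mathlib

open Finset Matrix BigOperators

set_option linter.unusedSectionVars false

variable {V : Type*} [Fintype V] [DecidableEq V]

/-- Number of edges of `G` with exactly one endpoint in `S` (each unordered edge counted once,
as the ordered pair going out of `S`). -/
def cutNum (G : SimpleGraph V) [DecidableRel G.Adj] (S : Finset V) : ℕ :=
  (Finset.univ.filter (fun p : V × V => G.Adj p.1 p.2 ∧ p.1 ∈ S ∧ p.2 ∉ S)).card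

/-- Number of edges of `G` with both endpoints in `S` or both outside `S`. -/
def cohNum (G : SimpleGraph V) [DecidableRel G.Adj] (S : Finset V) : ℕ :=
  G.edgeFinset.card - cutNum G S

/-- The maximum cut of `G`. -/
def mcut (G : SimpleGraph V) [DecidableRel G.Adj] : ℕ :=
  Finset.univ.sup (fun S : Finset V => cutNum G S)

/-- The ±1 partition vector of a vertex subset `S`. -/
def pvec (S : Finset V) : V → ℝ := fun v => if v ∈ S then 1 else -1

/-- The signless Laplacian matrix `Q = D + A` of a graph. -/
def signlessLap (G : SimpleGraph V) [DecidableRel G.Adj] : Matrix V V ℝ :=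
  G.degMatrix ℝ + G.adjMatrix ℝ

lemma isHermitian_adj (G : SimpleGraph V) [DecidableRel G.Adj] :
    (G.adjMatrix ℝ).IsHermitian := by
  rw [IsHermitian, conjTranspose_eq_transpose_of_trivial]
  exact SimpleGraph.isSymm_adjMatrix G

lemma isHermitian_lap (G : SimpleGraph V) [DecidableRel G.Adj] :
    (G.lapMatrix ℝ).IsHermitian := by
  rw [IsHermitian, conjTranspose_eq_transpose_of_trivial]
  exact G.isSymm_lapMatrix ℝ

lemma isHermitian_signlessLap (G : SimpleGraph V) [DecidableRel G.Adj] :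
    (signlessLap G).IsHermitian := by
  rw [IsHermitian, conjTranspose_eq_transpose_of_trivial]
  exact (G.isSymm_degMatrix ℝ).add (SimpleGraph.isSymm_adjMatrix G)

/-- The spanning subgraph of `G` consisting of the edges between `S` and its complement. -/
def crossGraph (G : SimpleGraph V) (S : Finset V) : SimpleGraph V where
  Adj u v := G.Adj u v ∧ ((u ∈ S) ↔ (v ∉ S))
  symm := ⟨fun u v h => ⟨h.1.symm, by tauto⟩⟩
  loopless := ⟨fun v h => G.loopless.irrefl v h.1⟩

/-- The spanning subgraph of `G` consisting of the edges inside `S` or inside its complement. -/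
def insideGraph (G : SimpleGraph V) (S : Finset V) : SimpleGraph V where
  Adj u v := G.Adj u v ∧ ((u ∈ S) ↔ (v ∈ S))
  symm := ⟨fun u v h => ⟨h.1.symm, h.2.symm⟩⟩
  loopless := ⟨fun v h => G.loopless.irrefl v h.1⟩

instance (G : SimpleGraph V) [DecidableRel G.Adj] (S : Finset V) :
    DecidableRel (crossGraph G S).Adj := fun _ _ => inferInstanceAs (Decidable (_ ∧ _))

instance (G : SimpleGraph V) [DecidableRel G.Adj] (S : Finset V) :
    DecidableRel (insideGraph G S).Adj := fun _ _ => inferInstanceAs (Decidable (_ ∧ _))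

/-- The second largest value (with multiplicity) of a finitely indexed family of reals. -/
noncomputable def secondLargest (f : V → ℝ) : ℝ :=
  (Multiset.sort (Finset.univ.val.map f) (· ≤ ·)).getD (Fintype.card V - 2) 0

/-- The join of two graphs: disjoint union plus all edges in between. -/
def joinGraph {α β : Type*} (H₁ : SimpleGraph α) (H₂ : SimpleGraph β) :
    SimpleGraph (α ⊕ β) where
  Adj x y :=
    match x, y with
    | Sum.inl u, Sum.inl v => H₁.Adj u v
    | Sum.inr u, Sum.inr v => H₂.Adj u v
    | Sum.inl _, Sum.inr _ => True
    | Sum.inr _, Sum.inl _ => True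
  symm := by refine ⟨?_⟩; rintro (u | u) (v | v) h <;> first | exact h.symm | trivial
  loopless := by
    refine ⟨?_⟩
    rintro (u | u) h
    · exact H₁.loopless.irrefl u h
    · exact H₂.loopless.irrefl u h

instance {α β : Type*} (H₁ : SimpleGraph α) (H₂ : SimpleGraph β)
    [DecidableRel H₁.Adj] [DecidableRel H₂.Adj] :
    DecidableRel (joinGraph H₁ H₂).Adj := fun x y =>
  match x, y with
  | Sum.inl u, Sum.inl v => inferInstanceAs (Decidable (H₁.Adj u v))
  | Sum.inr u, Sum.inr v => inferInstanceAs (Decidable (H₂.Adj u v))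
  | Sum.inl _, Sum.inr _ => inferInstanceAs (Decidable True)
  | Sum.inr _, Sum.inl _ => inferInstanceAs (Decidable True)

/-!
Let `x` be the `±1` vector of `S`. Then `xᵀ L x = 4 cut(S) = 4 mcut(G) = μ₁ n = μ₁ xᵀ x`, so `x`
attains the largest Rayleigh quotient of `L`: it lies in the kernel of the quadratic form of the
positive semidefinite matrix `μ₁ I - L`, hence is a `μ₁`-eigenvector. Reading `L x = μ₁ x` at a
vertex `v` gives `2 x_v d_v = μ₁ x_v`, where `d_v` counts the neighbours of `v` across the cut.
-/

namespace Matrix.IsHermitian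

open scoped MatrixOrder ComplexOrder

variable {n 𝕜 : Type*} [Fintype n] [DecidableEq n] [RCLike 𝕜] {A : Matrix n n 𝕜}

theorem posSemidef_iSup_eigenvalues_smul_one_sub (hA : A.IsHermitian) :
    ((⨆ i, hA.eigenvalues i) • (1 : Matrix n n 𝕜) - A).PosSemidef := by
  rw [← Matrix.le_iff, ← Algebra.algebraMap_eq_smul_one]
  refine le_algebraMap_of_spectrum_le (fun x hx => ?_) hA.isSelfAdjoint
  rw [hA.spectrum_real_eq_range_eigenvalues] at hx
  obtain ⟨i, rfl⟩ := hx
  exact le_ciSup (Set.finite_range _).bddAbove i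

theorem mulVec_eq_iSup_eigenvalues_smul (hA : A.IsHermitian) {x : n → 𝕜}
    (hx : star x ⬝ᵥ A *ᵥ x = (⨆ i, hA.eigenvalues i : ℝ) * (star x ⬝ᵥ x)) :
    A *ᵥ x = (⨆ i, hA.eigenvalues i) • x := by
  have hker := (hA.posSemidef_iSup_eigenvalues_smul_one_sub.dotProduct_mulVec_zero_iff x).mp (by
    rw [sub_mulVec, dotProduct_sub, smul_mulVec, one_mulVec, dotProduct_smul, hx]
    simp [RCLike.real_smul_eq_coe_mul])
  rw [sub_mulVec, smul_mulVec, one_mulVec, sub_eq_zero] at hker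
  exact hker.symm

end Matrix.IsHermitian

section PartitionVector

variable (G : SimpleGraph V) [DecidableRel G.Adj] (S : Finset V)

lemma pvec_sq (v : V) : pvec S v ^ 2 = 1 := by
  unfold pvec; split_ifs <;> norm_num

lemma pvec_sub_pvec (v u : V) :
    pvec S v - pvec S u = if (v ∈ S ↔ u ∉ S) then 2 * pvec S v else 0 := by
  unfold pvec; by_cases hv : v ∈ S <;> by_cases hu : u ∈ S <;> simp [hv, hu] <;> norm_num

lemma dotProduct_pvec_self : pvec S ⬝ᵥ pvec S = Fintype.card V := by
  simp [dotProduct, ← pow_two, pvec_sq]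

lemma lapMatrix_mulVec_pvec_apply (v : V) :
    (G.lapMatrix ℝ *ᵥ pvec S) v = 2 * pvec S v * #{u ∈ if v ∈ S then Sᶜ else S | G.Adj v u} := by
  have hdiff : (G.lapMatrix ℝ *ᵥ pvec S) v = ∑ u ∈ G.neighborFinset v, (pvec S v - pvec S u) := by
    rw [G.lapMatrix_mulVec_apply, sum_sub_distrib, sum_const, G.card_neighborFinset_eq_degree,
      nsmul_eq_mul]
  simp_rw [hdiff, pvec_sub_pvec]
  rw [← sum_filter, sum_const, nsmul_eq_mul, mul_comm]
  congr 3
  ext u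
  by_cases hv : v ∈ S <;> by_cases hu : u ∈ S <;> simp [hv, hu]

lemma card_filter_crossGraph_adj :
    #{p : V × V | (crossGraph G S).Adj p.1 p.2} = 2 * cutNum G S := by
  have hswap : #{p : V × V | G.Adj p.1 p.2 ∧ p.2 ∈ S ∧ p.1 ∉ S} = cutNum G S :=
    card_equiv (Equiv.prodComm V V) (by simp [G.adj_comm])
  rw [← card_filter_add_card_filter_not (fun p : V × V => p.1 ∈ S), filter_filter,
    filter_filter, two_mul]
  congr 1
  · unfold cutNum
    congr 1
    exact filter_congr fun p _ => by simp only [crossGraph]; tauto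
  · rw [← hswap]
    congr 1
    exact filter_congr fun p _ => by simp only [crossGraph]; tauto

lemma dotProduct_lapMatrix_mulVec_pvec :
    pvec S ⬝ᵥ (G.lapMatrix ℝ *ᵥ pvec S) = 4 * cutNum G S := by
  have hsq (i j : V) : (if G.Adj i j then (pvec S i - pvec S j) ^ 2 else 0) =
      if (crossGraph G S).Adj i j then 4 else 0 := by
    by_cases hij : G.Adj i j
    · simp only [crossGraph, hij, true_and, if_true, pvec_sub_pvec, ite_pow, mul_pow, pvec_sq]
      norm_num
    · simp [crossGraph, hij]
  rw [← toLinearMap₂'_apply', G.lapMatrix_toLinearMap₂' ℝ]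
  simp_rw [hsq]
  rw [← Fintype.sum_prod_type' (f := fun i j => if (crossGraph G S).Adj i j then (4 : ℝ) else 0),
    ← sum_filter, sum_const, card_filter_crossGraph_adj]
  ring

end PartitionVector

/-- If `S` attains the maximum cut and `G` is `L`-exact, then every vertex has exactly `μ₁/2`
neighbours on the opposite side of the partition `{S, V \ S}`. -/
theorem stmt14 (G : SimpleGraph V) [DecidableRel G.Adj] (S : Finset V)
    (hS : cutNum G S = mcut G)
    (hexact : (⨆ i, (isHermitian_lap G).eigenvalues i) = 4 / (Fintype.card V : ℝ) * mcut G) :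
    ∀ v : V, (((if v ∈ S then Sᶜ else S).filter (fun u => G.Adj v u)).card : ℝ) =
      (⨆ i, (isHermitian_lap G).eigenvalues i) / 2 := by
  intro v
  set μ := ⨆ i, (isHermitian_lap G).eigenvalues i
  have hn : (Fintype.card V : ℝ) ≠ 0 := Nat.cast_ne_zero.mpr (Fintype.card_pos_iff.mpr ⟨v⟩).ne'
  have hrayleigh :
      star (pvec S) ⬝ᵥ G.lapMatrix ℝ *ᵥ pvec S = μ * (star (pvec S) ⬝ᵥ pvec S) := by
    rw [star_trivial, dotProduct_lapMatrix_mulVec_pvec, dotProduct_pvec_self, hexact, hS]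
    field_simp
  have heig := congrFun ((isHermitian_lap G).mulVec_eq_iSup_eigenvalues_smul hrayleigh) v
  rw [lapMatrix_mulVec_pvec_apply, Pi.smul_apply, smul_eq_mul] at heig
  have hpv : pvec S v ≠ 0 := by unfold pvec; split_ifs <;> norm_num
  generalize (#{u ∈ if v ∈ S then Sᶜ else S | G.Adj v u} : ℝ) = c at heig ⊢
  have hc : 2 * c = μ := mul_right_cancel₀ hpv (by rw [← heig]; ring)
  linarith
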